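/- arXiv:math/0611259 — 3 statements merged into one kernel-verified Lean document; each statement's English description precedes it below -/
import Mathlib

section
/- Let Ω ⊆ ℝⁿ be an open set, let F : Ω → ℝⁿ be a map which is Lipschitz on Ω with Lipschitz constant L > 0 (with respect to the Euclidean norm), and let x : ℝ → Ω be a differentiable curve satisfying x'(t) = F(x(t)) for all t ∈ ℝ. If x is periodic with period T > 0 (that is, x(t + T) = x(t) for all t ∈ ℝ) and x is not constant, then T ≥ 2π / L. -/
open Real MeasureTheory Set
open scoped InnerProductSpace ENNReal

/-!
Yorke's argument. Put `v = F ∘ x = x'`; it has mean zero over a period since `x 0 = x T`.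
The Lipschitz bound only compares differences, so write the variance of a curve as a double
integral, `∫∫ ‖y t - y s‖² = 2T ∫ ‖y - ⨍ y‖²`; this gives `∫ ‖v‖² ≤ L² ∫ ‖x - ⨍ x‖²`.
Wirtinger's inequality, which follows from Parseval because the `n`-th Fourier coefficient of `x`
is `T / (2πin)` times that of `x'`, bounds the right side by `L² (T / 2π)² ∫ ‖v‖²`, and
`∫ ‖v‖² > 0` because `x` is not constant.
-/

theorem ContinuousOn.memLp_restrict_Ioc {E : Type*} [NormedAddCommGroup E] {f : ℝ → E}
    {a b : ℝ} (hf : ContinuousOn f (Icc a b)) (p : ℝ≥0∞) :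
    MemLp f p (volume.restrict (Ioc a b)) := by
  obtain ⟨C, hC⟩ := isCompact_Icc.exists_bound_of_continuousOn hf
  refine MemLp.of_bound ((hf.mono Ioc_subset_Icc_self).aestronglyMeasurable measurableSet_Ioc) C ?_
  exact (ae_restrict_iff' measurableSet_Ioc).2
    (ae_of_all _ fun t ht => hC t (Ioc_subset_Icc_self ht))

theorem fourierCoeffOn_zero_eq_average {E : Type*} [NormedAddCommGroup E] [NormedSpace ℂ E]
    [CompleteSpace E] {a b : ℝ} (hab : a < b) (f : ℝ → E) :
    fourierCoeffOn hab f 0 = ⨍ t in a..b, f t := by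
  simp [fourierCoeffOn_eq_integral, interval_average_eq]

theorem norm_fourierCoeffOn_le_of_hasDerivAt {a b : ℝ} (hab : a < b) {f f' : ℝ → ℂ} {n : ℤ}
    (hn : n ≠ 0) (hf : ∀ t ∈ Icc a b, HasDerivAt f (f' t) t)
    (hf' : IntervalIntegrable f' volume a b) (hfab : f a = f b) :
    ‖fourierCoeffOn hab f n‖ ≤ (b - a) / (2 * π) * ‖fourierCoeffOn hab f' n‖ := by
  rw [fourierCoeffOn_of_hasDerivAt hab hn (by rwa [uIcc_of_le hab.le]) hf', hfab, sub_self,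
    mul_zero, zero_sub, mul_neg, norm_neg, norm_mul, norm_mul, ← Complex.ofReal_sub]
  have hn' : (1 : ℝ) ≤ |(n : ℝ)| := by exact_mod_cast Int.one_le_abs hn
  have hfactor : ‖(1 : ℂ) / (-2 * π * Complex.I * n)‖ = 1 / (2 * π * |(n : ℝ)|) := by
    simp [abs_of_pos pi_pos]
  rw [hfactor, Complex.norm_real, Real.norm_of_nonneg (by linarith)]
  calc 1 / (2 * π * |(n : ℝ)|) * ((b - a) * ‖fourierCoeffOn hab f' n‖)
      = (b - a) / (2 * π) * ‖fourierCoeffOn hab f' n‖ / |(n : ℝ)| := by ring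
    _ ≤ (b - a) / (2 * π) * ‖fourierCoeffOn hab f' n‖ :=
      div_le_self (by have := sub_nonneg.2 hab.le; positivity) hn'

theorem Complex.integral_norm_sq_le_of_hasDerivAt_of_average_eq_zero {a b : ℝ} (hab : a < b)
    {f f' : ℝ → ℂ} (hf : ∀ t ∈ Icc a b, HasDerivAt f (f' t) t) (hf' : ContinuousOn f' (Icc a b))
    (hfab : f a = f b) (hmean : ⨍ t in a..b, f t = 0) :
    ∫ t in a..b, ‖f t‖ ^ 2 ≤ ((b - a) / (2 * π)) ^ 2 * ∫ t in a..b, ‖f' t‖ ^ 2 := by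
  have hfc : ContinuousOn f (Icc a b) := fun t ht => (hf t ht).continuousAt.continuousWithinAt
  have hcoeff : ∀ n, ‖fourierCoeffOn hab f n‖ ^ 2 ≤
      ((b - a) / (2 * π)) ^ 2 * ‖fourierCoeffOn hab f' n‖ ^ 2 := by
    intro n
    rcases eq_or_ne n 0 with rfl | hn
    · rw [fourierCoeffOn_zero_eq_average, hmean, norm_zero, sq, zero_mul]
      positivity
    · rw [← mul_pow]
      exact pow_le_pow_left₀ (norm_nonneg _) (norm_fourierCoeffOn_le_of_hasDerivAt hab hn hf
        (hf'.intervalIntegrable_of_Icc hab.le) hfab) 2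
  have hparseval := hasSum_le hcoeff (hasSum_sq_fourierCoeffOn hab (hfc.memLp_restrict_Ioc 2))
    ((hasSum_sq_fourierCoeffOn hab (hf'.memLp_restrict_Ioc 2)).mul_left _)
  rw [smul_eq_mul, smul_eq_mul, mul_left_comm] at hparseval
  exact le_of_mul_le_mul_left hparseval (inv_pos.2 (sub_pos.2 hab))

theorem Real.integral_norm_sq_le_of_hasDerivAt_of_average_eq_zero {a b : ℝ} (hab : a < b)
    {f f' : ℝ → ℝ} (hf : ∀ t ∈ Icc a b, HasDerivAt f (f' t) t) (hf' : ContinuousOn f' (Icc a b))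
    (hfab : f a = f b) (hmean : ⨍ t in a..b, f t = 0) :
    ∫ t in a..b, ‖f t‖ ^ 2 ≤ ((b - a) / (2 * π)) ^ 2 * ∫ t in a..b, ‖f' t‖ ^ 2 := by
  have hmeanℂ : ⨍ t in a..b, (f t : ℂ) = 0 := by
    rw [interval_average_eq] at hmean ⊢
    rw [intervalIntegral.integral_ofReal, Complex.real_smul, ← Complex.ofReal_mul, ← smul_eq_mul,
      hmean, Complex.ofReal_zero]
  simpa only [Complex.norm_real] using
    Complex.integral_norm_sq_le_of_hasDerivAt_of_average_eq_zero hab (f := fun t => (f t : ℂ))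
      (fun t ht => (hf t ht).ofReal_comp) (Complex.continuous_ofReal.comp_continuousOn hf')
      (by rw [hfab]) hmeanℂ

theorem EuclideanSpace.integral_norm_sq_le_of_hasDerivAt_of_average_eq_zero {ι : Type*}
    [Fintype ι] {a b : ℝ} (hab : a < b) {y y' : ℝ → EuclideanSpace ℝ ι}
    (hy : ∀ t ∈ Icc a b, HasDerivAt y (y' t) t) (hy' : ContinuousOn y' (Icc a b))
    (hyab : y a = y b) (hmean : ⨍ t in a..b, y t = 0) :
    ∫ t in a..b, ‖y t‖ ^ 2 ≤ ((b - a) / (2 * π)) ^ 2 * ∫ t in a..b, ‖y' t‖ ^ 2 := by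
  have hyc : ContinuousOn y (Icc a b) := fun t ht => (hy t ht).continuousAt.continuousWithinAt
  have hsum : ∀ z : ℝ → EuclideanSpace ℝ ι, ContinuousOn z (Icc a b) →
      ∫ t in a..b, ‖z t‖ ^ 2 = ∑ i, ∫ t in a..b, ‖z t i‖ ^ 2 := by
    intro z hz
    simp_rw [EuclideanSpace.norm_sq_eq]
    refine intervalIntegral.integral_finsetSum fun i _ => ContinuousOn.intervalIntegrable ?_
    rw [uIcc_of_le hab.le]
    exact ((EuclideanSpace.proj i).continuous.comp_continuousOn hz).norm.pow 2
  rw [hsum y hyc, hsum y' hy', Finset.mul_sum]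
  refine Finset.sum_le_sum fun i _ => Real.integral_norm_sq_le_of_hasDerivAt_of_average_eq_zero
    hab (fun t ht => ?_) ((EuclideanSpace.proj i).continuous.comp_continuousOn hy')
    (by rw [hyab]) ?_
  · exact (EuclideanSpace.proj i).hasFDerivAt.comp_hasDerivAt t (hy t ht)
  · have hcomp : ∫ t in a..b, y t i = (∫ t in a..b, y t) i := by
      simpa using (EuclideanSpace.proj (𝕜 := ℝ) i).intervalIntegral_comp_comm
        (hyc.intervalIntegrable_of_Icc (μ := volume) hab.le)
    rw [interval_average_eq] at hmean ⊢
    rw [hcomp, ← PiLp.smul_apply, hmean, PiLp.zero_apply]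

section Variance

variable {E : Type*} [NormedAddCommGroup E] [InnerProductSpace ℝ E] [CompleteSpace E]

theorem intervalIntegral.integral_inner {y : ℝ → E} {a b : ℝ}
    (hy : IntervalIntegrable y volume a b) (c : E) :
    ∫ t in a..b, ⟪c, y t⟫_ℝ = ⟪c, ∫ t in a..b, y t⟫_ℝ := by
  simpa using (innerSL ℝ c).intervalIntegral_comp_comm hy

theorem integral_norm_sub_sq {y : ℝ → E} (hy : Continuous y) (a b : ℝ) (c : E) :
    ∫ t in a..b, ‖y t - c‖ ^ 2 =
      (∫ t in a..b, ‖y t‖ ^ 2) - 2 * ⟪c, ∫ t in a..b, y t⟫_ℝ + (b - a) * ‖c‖ ^ 2 := by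
  simp_rw [norm_sub_sq_real, real_inner_comm c]
  have hsq : IntervalIntegrable (fun t => ‖y t‖ ^ 2) volume a b :=
    (hy.norm.pow 2).intervalIntegrable a b
  have hinner : IntervalIntegrable (fun t => 2 * ⟪c, y t⟫_ℝ) volume a b :=
    (continuous_const.mul (continuous_const.inner hy)).intervalIntegrable a b
  rw [intervalIntegral.integral_add (hsq.sub hinner) intervalIntegrable_const,
    intervalIntegral.integral_sub hsq hinner, intervalIntegral.integral_const_mul,
    intervalIntegral.integral_inner (hy.intervalIntegrable a b), intervalIntegral.integral_const,
    smul_eq_mul]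

theorem integral_integral_norm_sub_sq {y : ℝ → E} (hy : Continuous y) (a b : ℝ) :
    ∫ s in a..b, ∫ t in a..b, ‖y t - y s‖ ^ 2 =
      2 * (b - a) * ∫ t in a..b, ‖y t - ⨍ u in a..b, y u‖ ^ 2 := by
  simp_rw [integral_norm_sub_sq hy, interval_average_eq, real_inner_comm _ (y _)]
  have hinner : IntervalIntegrable (fun s => 2 * ⟪∫ t in a..b, y t, y s⟫_ℝ) volume a b :=
    (continuous_const.mul (continuous_const.inner hy)).intervalIntegrable a b
  have hsq : IntervalIntegrable (fun s => (b - a) * ‖y s‖ ^ 2) volume a b :=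
    (continuous_const.mul (hy.norm.pow 2)).intervalIntegrable a b
  rw [intervalIntegral.integral_add (intervalIntegrable_const.sub hinner) hsq,
    intervalIntegral.integral_sub intervalIntegrable_const hinner,
    intervalIntegral.integral_const_mul, intervalIntegral.integral_const_mul,
    intervalIntegral.integral_inner (hy.intervalIntegrable a b), intervalIntegral.integral_const,
    smul_eq_mul, real_inner_smul_left, norm_smul, real_inner_self_eq_norm_sq, norm_inv,
    Real.norm_eq_abs]
  rcases eq_or_ne b a with rfl | h
  · simp
  · rw [mul_pow, inv_pow, sq_abs]
    field_simp [sub_ne_zero.2 h]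
    ring

theorem integral_norm_sub_average_sq_le_of_norm_sub_le {F : Type*} [NormedAddCommGroup F]
    [InnerProductSpace ℝ F] [CompleteSpace F] {u : ℝ → E} {w : ℝ → F} (hu : Continuous u)
    (hw : Continuous w) {a b K : ℝ} (hab : a < b)
    (huw : ∀ s ∈ Icc a b, ∀ t ∈ Icc a b, ‖u t - u s‖ ≤ K * ‖w t - w s‖) :
    ∫ t in a..b, ‖u t - ⨍ r in a..b, u r‖ ^ 2 ≤
      K ^ 2 * ∫ t in a..b, ‖w t - ⨍ r in a..b, w r‖ ^ 2 := by
  have hpos : 0 < 2 * (b - a) := by linarith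
  refine le_of_mul_le_mul_left ?_ hpos
  rw [mul_left_comm, ← integral_integral_norm_sub_sq hu, ← integral_integral_norm_sub_sq hw,
    ← intervalIntegral.integral_const_mul]
  refine intervalIntegral.integral_mono_on hab.le
    ((intervalIntegral.continuous_parametric_intervalIntegral_of_continuous'
      (by fun_prop) a b).intervalIntegrable a b)
    ((continuous_const.mul (intervalIntegral.continuous_parametric_intervalIntegral_of_continuous'
      (by fun_prop) a b)).intervalIntegrable a b) fun s hs => ?_
  rw [← intervalIntegral.integral_const_mul]
  refine intervalIntegral.integral_mono_on hab.le
    ((by fun_prop : Continuous _).intervalIntegrable a b)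
    ((by fun_prop : Continuous _).intervalIntegrable a b) fun t ht => ?_
  rw [← mul_pow]
  exact pow_le_pow_left₀ (norm_nonneg _) (huw s hs t ht) 2

end Variance

theorem interval_average_sub_interval_average_eq_zero {E : Type*} [NormedAddCommGroup E]
    [NormedSpace ℝ E] [CompleteSpace E] {y : ℝ → E} {a b : ℝ} (hab : a ≠ b)
    (hy : IntervalIntegrable y volume a b) :
    ⨍ t in a..b, (y t - ⨍ r in a..b, y r) = 0 := by
  rw [interval_average_eq, intervalIntegral.integral_sub hy intervalIntegrable_const,
    intervalIntegral.integral_const, smul_sub, ← interval_average_eq, smul_smul,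
    inv_mul_cancel₀ (sub_ne_zero.2 hab.symm), one_smul, sub_self]

theorem Function.Periodic.integral_norm_sq_pos {E : Type*} [NormedAddCommGroup E] {u : ℝ → E}
    {T : ℝ} (hper : Function.Periodic u T) (hT : 0 < T) (hu : Continuous u)
    (hne : ∃ t, u t ≠ 0) :
    0 < ∫ t in (0 : ℝ)..T, ‖u t‖ ^ 2 := by
  obtain ⟨t₁, ht₁⟩ := hne
  obtain ⟨t₀, ht₀, hu₀⟩ := hper.exists_mem_Ico₀ hT t₁
  refine intervalIntegral.integral_pos hT (hu.norm.pow 2).continuousOn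
    (fun t _ => by positivity) ⟨t₀, Ico_subset_Icc_self ht₀, ?_⟩
  have : u t₀ ≠ 0 := hu₀ ▸ ht₁
  positivity

theorem period_bounding_lemma_general {n : ℕ} {Ω : Set (EuclideanSpace ℝ (Fin n))}
    {F : EuclideanSpace ℝ (Fin n) → EuclideanSpace ℝ (Fin n)} {L : ℝ} (hL : 0 < L)
    (hLip : ∀ p ∈ Ω, ∀ q ∈ Ω, ‖F p - F q‖ ≤ L * ‖p - q‖)
    {x : ℝ → EuclideanSpace ℝ (Fin n)} (hx : ∀ t, x t ∈ Ω)
    (hode : ∀ t, HasDerivAt x (F (x t)) t)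
    {T : ℝ} (hT : 0 < T) (hper : ∀ t, x (t + T) = x t)
    (hnc : ¬ ∀ s t, x s = x t) :
    2 * π / L ≤ T := by
  have hxc : Continuous x := continuous_iff_continuousAt.2 fun t => (hode t).continuousAt
  have hFc : ContinuousOn F Ω := (LipschitzOnWith.of_dist_le_mul (K := L.toNNReal)
    fun p hp q hq => by simpa [dist_eq_norm, hL.le] using hLip p hp q hq).continuousOn
  have hvc : Continuous fun t => F (x t) := hFc.comp_continuous hxc hx
  have hx0T : x 0 = x T := by simpa using (hper 0).symm
  have hv_mean : ⨍ t in (0 : ℝ)..T, F (x t) = 0 := by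
    rw [interval_average_eq, intervalIntegral.integral_eq_sub_of_hasDerivAt (fun t _ => hode t)
      (hvc.intervalIntegrable 0 T), hx0T, sub_self, smul_zero]
  have hv_pos : 0 < ∫ t in (0 : ℝ)..T, ‖F (x t)‖ ^ 2 := by
    refine Function.Periodic.integral_norm_sq_pos (fun t => by simp only [hper]) hT hvc ?_
    by_contra! hv
    exact hnc (is_const_of_deriv_eq_zero (fun t => (hode t).differentiableAt)
      fun t => by rw [(hode t).deriv, hv])
  have hLipschitz := integral_norm_sub_average_sq_le_of_norm_sub_le hvc hxc hT
    fun s _ t _ => hLip _ (hx t) _ (hx s)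
  have hWirtinger := EuclideanSpace.integral_norm_sq_le_of_hasDerivAt_of_average_eq_zero hT
    (y := fun t => x t - ⨍ r in (0 : ℝ)..T, x r) (fun t _ => (hode t).sub_const _)
    hvc.continuousOn (by simp only [hx0T])
    (interval_average_sub_interval_average_eq_zero hT.ne (hxc.intervalIntegrable 0 T))
  have hv_le : ∫ t in (0 : ℝ)..T, ‖F (x t)‖ ^ 2 ≤
      (L * T / (2 * π)) ^ 2 * ∫ t in (0 : ℝ)..T, ‖F (x t)‖ ^ 2 := calc
    _ ≤ L ^ 2 * ∫ t in (0 : ℝ)..T, ‖x t - ⨍ r in (0 : ℝ)..T, x r‖ ^ 2 := by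
      simpa [hv_mean] using hLipschitz
    _ ≤ L ^ 2 * ((T / (2 * π)) ^ 2 * ∫ t in (0 : ℝ)..T, ‖F (x t)‖ ^ 2) := by
      gcongr
      simpa using hWirtinger
    _ = _ := by ring
  rw [le_mul_iff_one_le_left hv_pos, one_le_sq_iff₀ (by positivity),
    one_le_div (by positivity)] at hv_le
  rw [div_le_iff₀ hL]
  linarith

/-- **Period Bounding Lemma.** If `F : Ω → ℝⁿ` is Lipschitz with constant `L > 0` on the open
set `Ω ⊆ ℝⁿ` and `x : ℝ → Ω` is a non-constant periodic solution of `x' = F(x)` with period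
`T > 0`, then `T ≥ 2π / L`. -/
theorem period_bounding_lemma {n : ℕ} {Ω : Set (EuclideanSpace ℝ (Fin n))} (hΩ : IsOpen Ω)
    {F : EuclideanSpace ℝ (Fin n) → EuclideanSpace ℝ (Fin n)} {L : ℝ} (hL : 0 < L)
    (hLip : ∀ p ∈ Ω, ∀ q ∈ Ω, ‖F p - F q‖ ≤ L * ‖p - q‖)
    {x : ℝ → EuclideanSpace ℝ (Fin n)} (hx : ∀ t, x t ∈ Ω)
    (hode : ∀ t, HasDerivAt x (F (x t)) t)
    {T : ℝ} (hT : 0 < T) (hper : ∀ t, x (t + T) = x t)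
    (hnc : ¬ ∀ s t, x s = x t) :
    2 * π / L ≤ T :=
  period_bounding_lemma_general hL hLip hx hode hT hper hnc
end

section
/- Let R be a commutative ring, let (L, [·,·]) be a Lie algebra over R, and let N : L → L be an R-linear map whose Nijenhuis torsion vanishes, i.e. [N x, N y] − N [N x, y] − N [x, N y] + N (N [x, y]) = 0 for all x, y ∈ L. Then the deformed bracket [x, y]_N := [N x, y] + [x, N y] − N [x, y] is R-bilinear, alternating, and satisfies the Jacobi identity, hence defines a Lie algebra structure on L; moreover N is a Lie algebra homomorphism from (L, [·,·]_N) to (L, [·,·]), i.e. N[x, y]_N = [N x, N y] for all x, y ∈ L. -/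
/-- Deformation of a Lie bracket by a Nijenhuis tensor: if `N : L → L` is linear with vanishing
Nijenhuis torsion, then the deformed bracket `[x,y]_N = [Nx,y] + [x,Ny] - N[x,y]` is bilinear,
alternating and satisfies the Jacobi identity (hence defines a Lie algebra structure on `L`),
and `N` is a Lie algebra homomorphism from the deformed bracket to the original one. -/
theorem nijenhuis_deformed_bracket {R : Type*} [CommRing R] {L : Type*} [LieRing L]
    [LieAlgebra R L] (N : L →ₗ[R] L)
    (hN : ∀ x y : L, ⁅N x, N y⁆ - N ⁅N x, y⁆ - N ⁅x, N y⁆ + N (N ⁅x, y⁆) = 0)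
    (bN : L → L → L) (hbN : ∀ x y, bN x y = ⁅N x, y⁆ + ⁅x, N y⁆ - N ⁅x, y⁆) :
    (∀ x y z : L, bN (x + y) z = bN x z + bN y z) ∧
    (∀ x y z : L, bN x (y + z) = bN x y + bN x z) ∧
    (∀ (r : R) (x y : L), bN (r • x) y = r • bN x y) ∧
    (∀ (r : R) (x y : L), bN x (r • y) = r • bN x y) ∧
    (∀ x : L, bN x x = 0) ∧
    (∀ x y z : L, bN x (bN y z) + bN y (bN z x) + bN z (bN x y) = 0) ∧
    (∀ x y : L, N (bN x y) = ⁅N x, N y⁆) := by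
  refine ⟨?_, ?_, ?_, ?_, ?_, ?_, ?_⟩
  · intro x y z
    simp only [hbN, map_add, add_lie, lie_add]
    abel
  · intro x y z
    simp only [hbN, map_add, add_lie, lie_add]
    abel
  · intro r x y
    simp only [hbN, map_smul, smul_lie, lie_smul, smul_sub, smul_add]
  · intro r x y
    simp only [hbN, map_smul, smul_lie, lie_smul, smul_sub, smul_add]
  · intro x
    have hs := lie_skew (N x) x
    simp only [hbN, lie_self, map_zero, sub_zero]
    linear_combination (norm := module) -hs
  · intro x y z
    have h1 := hN x ⁅y, z⁆
    have h2 := hN y ⁅z, x⁆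
    have h3 := hN z ⁅x, y⁆
    have j1 := lie_jacobi (N x) (N y) z
    have j2 := lie_jacobi (N x) y (N z)
    have j3 := lie_jacobi x (N y) (N z)
    have nj1 := congrArg N (lie_jacobi (N x) y z)
    have nj2 := congrArg N (lie_jacobi x (N y) z)
    have nj3 := congrArg N (lie_jacobi x y (N z))
    have nnj := congrArg N (congrArg N (lie_jacobi x y z))
    have c1 := congrArg (fun w => ⁅x, w⁆) (hN y z)
    have c2 := congrArg (fun w => ⁅y, w⁆) (hN z x)
    have c3 := congrArg (fun w => ⁅z, w⁆) (hN x y)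
    simp only [lie_add, lie_sub, lie_zero] at c1 c2 c3
    simp only [map_add, map_zero] at nj1 nj2 nj3 nnj
    simp only [hbN, lie_add, lie_sub, add_lie, sub_lie, map_add, map_sub]
    linear_combination (norm := module) -h1 - h2 - h3 + j1 + j2 + j3 - nj1 - nj2 - nj3 + nnj - c1 - c2 - c3
  · intro x y
    have h := hN x y
    simp only [hbN, map_add, map_sub]
    linear_combination (norm := module) -h
end

section
/- Let V be a finite-dimensional real normed vector space and let T : V → V be a continuous linear endomorphism with operator norm ‖T‖ < 2π. If the exponential exp(T) = ∑_{k≥0} T^k / k! equals the identity map, then T = 0. -/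
/-!
Complexify `T` into a complex Banach algebra through its matrix in a basis. There a spectral
value `z` satisfies `‖z‖ ^ k ≤ C * ‖T‖ ^ k` for every `k`, hence `‖z‖ ≤ ‖T‖ < 2π`; as `exp z`
lies in the spectrum of `exp T = 1`, we get `exp z = 1` and so `z = 0`. With spectrum `{0}` the
complexified operator `N` is nilpotent, and if `N ^ (j + 2) = 0 ≠ N ^ (j + 1)` then
`N ^ j * exp N = N ^ j + N ^ (j + 1) ≠ N ^ j`, contradicting `exp N = 1` unless `N = 0`.
-/

open NormedSpace Polynomial
open scoped Real

theorem le_of_forall_pow_le_mul_pow {a b C : ℝ} (hb : 0 ≤ b)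
    (h : ∀ k : ℕ, 0 < k → a ^ k ≤ C * b ^ k) : a ≤ b := by
  by_contra! hba
  rcases hb.eq_or_lt with rfl | hb
  · linarith [h 1 one_pos]
  · obtain ⟨k, hk, hk0⟩ :=
      ((tendsto_pow_atTop_atTop_of_one_lt ((one_lt_div hb).2 hba)).eventually_gt_atTop C
        |>.and (Filter.eventually_gt_atTop 0)).exists
    rw [div_pow, lt_div_iff₀ (by positivity)] at hk
    linarith [h k hk0]

theorem spectrum.norm_le_of_mem_map {𝕜 A B : Type*} [NormedField 𝕜] [NormedRing A] [NormedRing B]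
    [NormedAlgebra 𝕜 B] [CompleteSpace B] (φ : A →+* B) (C : NNReal)
    (hφ : ∀ a, ‖φ a‖ ≤ C * ‖a‖) {a : A} {z : 𝕜} (hz : z ∈ spectrum 𝕜 (φ a)) : ‖z‖ ≤ ‖a‖ := by
  refine le_of_forall_pow_le_mul_pow (C := C * ‖(1 : B)‖) (norm_nonneg a) fun k hk => ?_
  have hzk : z ^ k ∈ spectrum 𝕜 (φ (a ^ k)) := map_pow φ a k ▸ spectrum.pow_mem_pow _ k hz
  calc ‖z‖ ^ k = ‖z ^ k‖ := (norm_pow z k).symm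
    _ ≤ ‖φ (a ^ k)‖ * ‖(1 : B)‖ := spectrum.norm_le_norm_mul_of_mem hzk
    _ ≤ C * ‖a ^ k‖ * ‖(1 : B)‖ := by gcongr; exact hφ _
    _ ≤ C * ‖a‖ ^ k * ‖(1 : B)‖ := by gcongr; exact norm_pow_le' a hk
    _ = C * ‖(1 : B)‖ * ‖a‖ ^ k := by ring

theorem Complex.eq_zero_of_exp_eq_one_of_norm_lt {z : ℂ} (hz : Complex.exp z = 1)
    (hnorm : ‖z‖ < 2 * π) : z = 0 := by
  obtain ⟨m, rfl⟩ := Complex.exp_eq_one_iff.1 hz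
  have hnorm_eq : ‖(m : ℂ) * (2 * π * I)‖ = |(m : ℝ)| * (2 * π) := by
    simp [abs_of_pos Real.pi_pos]
  have hm : |(m : ℝ)| < 1 :=
    (mul_lt_iff_lt_one_left (by positivity)).1 (hnorm_eq ▸ hnorm)
  have hm : |m| < 1 := by exact_mod_cast hm
  simp [Int.abs_lt_one_iff.1 hm]

theorem spectrum_subset_zero_of_exp_eq_one {A : Type*} [NormedRing A] [NormedAlgebra ℂ A]
    [CompleteSpace A] {a : A} (ha : exp a = 1) (hsmall : ∀ z ∈ spectrum ℂ a, ‖z‖ < 2 * π) :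
    spectrum ℂ a ⊆ {0} := by
  nontriviality A using spectrum.of_subsingleton
  intro z hz
  have hexp : exp z ∈ spectrum ℂ (1 : A) := ha ▸ spectrum.exp_mem_exp a hz
  rw [spectrum.one_eq, ← Complex.exp_eq_exp_ℂ] at hexp
  exact Complex.eq_zero_of_exp_eq_one_of_norm_lt hexp (hsmall z hz)

theorem Module.End.isNilpotent_of_spectrum_subset_zero {K W : Type*} [Field K] [IsAlgClosed K]
    [AddCommGroup W] [Module K W] [FiniteDimensional K W] {f : Module.End K W}
    (hf : spectrum K f ⊆ {0}) : IsNilpotent f := by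
  set p := minpoly K f
  have hroots : p.roots = Multiset.replicate (Multiset.card p.roots) 0 :=
    Multiset.eq_replicate.2 ⟨rfl, fun μ hμ =>
      hf (Module.End.hasEigenvalue_of_isRoot (isRoot_of_mem_roots hμ)).mem_spectrum⟩
  have hp : p = X ^ Multiset.card p.roots := by
    conv_lhs => rw [(IsAlgClosed.splits p).eq_prod_roots_of_monic
      (minpoly.monic (Algebra.IsIntegral.isIntegral f)), hroots]
    simp
  refine ⟨Multiset.card p.roots, ?_⟩
  have hf_root : aeval f p = 0 := minpoly.aeval K f
  rwa [hp, map_pow, aeval_X] at hf_root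

theorem ContinuousLinearMap.isNilpotent_of_spectrum_subset_zero {𝕜 W : Type*}
    [NontriviallyNormedField 𝕜] [CompleteSpace 𝕜] [IsAlgClosed 𝕜] [NormedAddCommGroup W]
    [NormedSpace 𝕜 W] [FiniteDimensional 𝕜 W] {f : W →L[𝕜] W} (hf : spectrum 𝕜 f ⊆ {0}) :
    IsNilpotent f := by
  let e := Module.End.toContinuousLinearMap (𝕜 := 𝕜) W
  rw [← e.apply_symm_apply f, IsNilpotent.map_iff e.injective]
  exact Module.End.isNilpotent_of_spectrum_subset_zero
    (by rwa [← AlgEquiv.spectrum_eq e, e.apply_symm_apply])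

section NilpotentExp

variable {A : Type*} [Ring A] [TopologicalSpace A] [IsTopologicalRing A] [Algebra ℚ A]

theorem NormedSpace.exp_eq_sum_of_pow_eq_zero {N : A} {k : ℕ} (h : N ^ k = 0) :
    exp N = ∑ i ∈ Finset.range k, (i.factorial : ℚ)⁻¹ • N ^ i := by
  rw [exp_eq_tsum ℚ]
  exact tsum_eq_sum fun i hi => by
    rw [pow_eq_zero_of_le (by simpa using hi) h, smul_zero]

theorem pow_mul_exp_of_pow_eq_zero {N : A} {j : ℕ} (h : N ^ (j + 2) = 0) :
    N ^ j * exp N = N ^ j + N ^ (j + 1) := by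
  have hvanish : ∀ i ∈ Finset.range (j + 2), i ∉ Finset.range 2 →
      N ^ j * ((i.factorial : ℚ)⁻¹ • N ^ i) = 0 := fun i _ hi => by
    rw [Finset.mem_range, not_lt] at hi
    rw [mul_smul_comm, ← pow_add, pow_eq_zero_of_le (by omega) h, smul_zero]
  rw [exp_eq_sum_of_pow_eq_zero h, Finset.mul_sum,
    ← Finset.sum_subset (Finset.range_subset_range.2 (by omega)) hvanish]
  simp [Finset.sum_range_succ, pow_succ]

theorem IsNilpotent.eq_zero_of_exp_eq_one {N : A} (hN : IsNilpotent N)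
    (h : NormedSpace.exp N = 1) : N = 0 := by
  nontriviality A
  by_contra hN0
  obtain ⟨j, hj⟩ : ∃ j, nilpotencyClass N = j + 2 := by
    have hpos := pos_nilpotencyClass_iff.2 hN
    have hne_one := mt nilpotencyClass_eq_one.1 hN0
    exact ⟨nilpotencyClass N - 2, by omega⟩
  have hpow := pow_mul_exp_of_pow_eq_zero (hj ▸ pow_nilpotencyClass hN)
  rw [h, mul_one, left_eq_add] at hpow
  exact pow_pred_nilpotencyClass hN (by rwa [hj])

end NilpotentExp

namespace Module.Basis

variable {V ι : Type*} [NormedAddCommGroup V] [NormedSpace ℝ V] [FiniteDimensional ℝ V]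
  [Fintype ι] [DecidableEq ι]

noncomputable def complexification (b : Basis ι ℝ V) :
    (V →L[ℝ] V) →ₐ[ℝ] ((ι → ℂ) →L[ℂ] (ι → ℂ)) :=
  ((Matrix.toLinAlgEquiv'.trans (Module.End.toContinuousLinearMap (ι → ℂ))).restrictScalars
      ℝ).toAlgHom.comp <|
    Complex.ofRealAm.mapMatrix.comp <|
      ((Module.End.toContinuousLinearMap V).symm.trans (LinearMap.toMatrixAlgEquiv b)).toAlgHom

theorem complexification_injective (b : Basis ι ℝ V) :
    Function.Injective b.complexification := by
  simp only [complexification, AlgHom.coe_comp, AlgEquiv.coe_toAlgHom,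
    AlgEquiv.coe_restrictScalars, AlgEquiv.coe_trans]
  exact ((EquivLike.injective _).comp (EquivLike.injective _)).comp <|
    (Matrix.map_injective Complex.ofReal_injective).comp <|
      (EquivLike.injective _).comp (EquivLike.injective _)

end Module.Basis

/-- If `T` is a continuous linear endomorphism of a finite-dimensional real normed vector space
with operator norm `‖T‖ < 2π` and `exp T = id`, then `T = 0`. -/
theorem exp_eq_one_of_norm_lt_two_pi {V : Type*} [NormedAddCommGroup V] [NormedSpace ℝ V]
    [FiniteDimensional ℝ V] (T : V →L[ℝ] V) (hT : ‖T‖ < 2 * Real.pi)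
    (h : NormedSpace.exp T = 1) : T = 0 := by
  let ψ := (Module.Free.chooseBasis ℝ V).complexification
  let ψL := LinearMap.toContinuousLinearMap ψ.toLinearMap
  have hexp : exp (ψ T) = 1 := by
    -- `map_exp` asks for a normed `ℚ`-algebra structure, on which `exp` does not depend
    let : NormedAlgebra ℚ (V →L[ℝ] V) := .restrictScalars ℚ ℝ _
    rw [← map_exp ψ ψL.continuous T, h, map_one]
  have hspec : spectrum ℂ (ψ T) ⊆ {0} :=
    spectrum_subset_zero_of_exp_eq_one hexp fun z hz =>
      (spectrum.norm_le_of_mem_map ψ.toRingHom ‖ψL‖₊ ψL.le_opNorm hz).trans_lt hT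
  have hψT : ψ T = 0 :=
    (ContinuousLinearMap.isNilpotent_of_spectrum_subset_zero hspec).eq_zero_of_exp_eq_one hexp
  exact Module.Basis.complexification_injective _ (by rw [hψT, map_zero])
end
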